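/- arXiv:0912.1150 — 8 statements merged into one kernel-verified Lean document; each statement's English description precedes it below -/
import Mathlib

section
/- If P is a finite set of points in the plane that is not contained in a single line, then the visibility graph V(P) has diameter at most 2: for any two distinct points v, w in P, either v and w are visible with respect to P, or there exists a point u in P visible to both v and w. -/
/-!
Since `P` is not collinear, some `q ∈ P` lies off the line through `v` and `w`; take an
affine functional `f` vanishing on that line with `f q ≠ 0`. Among the points of `P` off the
line, take `u` with `|f u|` minimal. A point strictly between `u` and a point of the line has a
strictly smaller but still nonzero value of `|f|`, so it cannot lie in `P`: `u` sees both `v`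
and `w`.
-/

/-- Two distinct points are visible w.r.t. `P` if no point of `P` lies strictly between them. -/
def Visible (P : Set (ℝ × ℝ)) (v w : ℝ × ℝ) : Prop :=
  v ≠ w ∧ ∀ p ∈ P, p ∉ openSegment ℝ v w

theorem Collinear.affineSpan {k V P : Type*} [DivisionRing k] [AddCommGroup V] [Module k V]
    [AddTorsor V P] {s : Set P} (h : Collinear k s) : Collinear k (affineSpan k s : Set P) := by
  rwa [Collinear, ← AffineSubspace.direction, direction_affineSpan]

theorem exists_mem_notMem_affineSpan_pair_of_not_collinear {k V P : Type*} [DivisionRing k]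
    [AddCommGroup V] [Module k V] [AddTorsor V P] {s : Set P} (hs : ¬Collinear k s) (v w : P) :
    ∃ q ∈ s, q ∉ line[k, v, w] :=
  Set.not_subset.mp fun h => hs ((collinear_pair k v w).affineSpan.subset h)

theorem AffineSubspace.exists_affineMap_eq_zero_ne_zero {k E : Type*} [Field k] [AddCommGroup E]
    [Module k E] {s : AffineSubspace k E} {v q : E} (hv : v ∈ s) (hq : q ∉ s) :
    ∃ f : E →ᵃ[k] k, (∀ p ∈ s, f p = 0) ∧ f q ≠ 0 := by
  rw [← vsub_right_mem_direction_iff_mem hv] at hq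
  obtain ⟨φ, hφq, hφs⟩ := Submodule.exists_dual_map_eq_bot_of_notMem hq inferInstance
  have hφ (x) (hx : x ∈ s.direction) : φ x = 0 := by
    simpa [hφs] using Submodule.mem_map_of_mem (f := φ) hx
  refine ⟨φ.toAffineMap - AffineMap.const k E (φ v), fun p hp => ?_, ?_⟩
  · simpa [sub_eq_zero, map_sub] using hφ _ (vsub_mem_direction hp hv)
  · simpa [sub_eq_zero, map_sub] using hφq

theorem abs_pos_and_lt_of_mem_openSegment_zero {𝕜 : Type*} [Field 𝕜] [LinearOrder 𝕜]
    [IsStrictOrderedRing 𝕜] {a x : 𝕜} (ha : a ≠ 0) (hx : x ∈ openSegment 𝕜 a 0) :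
    0 < |x| ∧ |x| < |a| := by
  obtain ⟨θ, ⟨hθ₀, hθ₁⟩, rfl⟩ := (openSegment_eq_image 𝕜 a 0).subset hx
  simp only [smul_eq_mul, mul_zero, add_zero, abs_mul, abs_of_pos (sub_pos.2 hθ₁)]
  have := abs_pos.2 ha
  constructor <;> nlinarith

theorem Finset.exists_mem_forall_notMem_openSegment {𝕜 E : Type*} [Field 𝕜] [LinearOrder 𝕜]
    [IsStrictOrderedRing 𝕜] [AddCommGroup E] [Module 𝕜 E] (P : Finset E) (f : E →ᵃ[𝕜] 𝕜)
    (h : ∃ q ∈ P, f q ≠ 0) :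
    ∃ u ∈ P, f u ≠ 0 ∧ ∀ v, f v = 0 → ∀ p ∈ P, p ∉ openSegment 𝕜 u v := by
  classical
  obtain ⟨u, hu, hmin⟩ := (P.filter (f · ≠ 0)).exists_min_image (|f ·|)
    (by simpa [Finset.filter_nonempty_iff] using h)
  rw [Finset.mem_filter] at hu
  refine ⟨u, hu.1, hu.2, fun v hv p hp hpuv => ?_⟩
  have hfp : f p ∈ openSegment 𝕜 (f u) 0 := hv ▸ image_openSegment 𝕜 f u v ▸ ⟨p, hpuv, rfl⟩
  obtain ⟨hpos, hlt⟩ := abs_pos_and_lt_of_mem_openSegment_zero hu.2 hfp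
  exact (hmin p (Finset.mem_filter.2 ⟨hp, abs_pos.1 hpos⟩)).not_gt hlt

theorem visibility_graph_diameter_le_two_general (P : Finset (ℝ × ℝ))
    (hP : ¬ Collinear ℝ (P : Set (ℝ × ℝ)))
    (v w : ℝ × ℝ) :
    Visible (P : Set (ℝ × ℝ)) v w ∨
      ∃ u ∈ P, u ≠ v ∧ u ≠ w ∧ Visible (P : Set (ℝ × ℝ)) u v ∧
        Visible (P : Set (ℝ × ℝ)) u w := by
  obtain ⟨q, hqP, hq⟩ := exists_mem_notMem_affineSpan_pair_of_not_collinear hP v w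
  obtain ⟨f, hf, hfq⟩ :=
    AffineSubspace.exists_affineMap_eq_zero_ne_zero (left_mem_affineSpan_pair ℝ v w) hq
  obtain ⟨u, huP, hfu, hu⟩ := P.exists_mem_forall_notMem_openSegment f ⟨q, hqP, hfq⟩
  have hfv : f v = 0 := hf v (left_mem_affineSpan_pair ℝ v w)
  have hfw : f w = 0 := hf w (right_mem_affineSpan_pair ℝ v w)
  have huv : u ≠ v := fun h => hfu (h ▸ hfv)
  have huw : u ≠ w := fun h => hfu (h ▸ hfw)
  exact .inr ⟨u, huP, huv, huw, ⟨huv, hu v hfv⟩, ⟨huw, hu w hfw⟩⟩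

/-- The visibility graph of a finite non-collinear point set has diameter at most 2. -/
theorem visibility_graph_diameter_le_two (P : Finset (ℝ × ℝ))
    (hP : ¬ Collinear ℝ (P : Set (ℝ × ℝ)))
    (v w : ℝ × ℝ) (hv : v ∈ P) (hw : w ∈ P) (hvw : v ≠ w) :
    Visible (P : Set (ℝ × ℝ)) v w ∨
      ∃ u ∈ P, u ≠ v ∧ u ≠ w ∧ Visible (P : Set (ℝ × ℝ)) u v ∧
        Visible (P : Set (ℝ × ℝ)) u w :=
  visibility_graph_diameter_le_two_general P hP v w
end

section
/- Let P be a finite set of n ≥ 3 points in general position in the plane (no three collinear), and let B be a set of points blocking P. Then |B| ≥ 2n - 3. -/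
/-- `B` blocks `P`: `B` is disjoint from `P` and every pair of distinct points of `P`
has a point of `B` strictly between them. -/
def Blocks (B P : Set (ℝ × ℝ)) : Prop :=
  Disjoint B P ∧ ∀ v ∈ P, ∀ w ∈ P, v ≠ w → ∃ b ∈ B, b ∈ openSegment ℝ v w

/-- A set of points is in general position if no three of its points are collinear. -/
def GenPos (P : Set (ℝ × ℝ)) : Prop :=
  ∀ p ∈ P, ∀ q ∈ P, ∀ r ∈ P, p ≠ q → p ≠ r → q ≠ r → ¬ Collinear ℝ {p, q, r}

open Finset

/-! Tilt the height generically so that `P` has a unique lowest point `p`, and project the other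
`n - 1` points centrally from `p` onto a line. By general position the projections are distinct.
The blocker of `p` and `q` projects onto the projection of `q`, and the blocker of `q` and `r`
projects strictly between the projections of `q` and `r` (its projection is a mediant of theirs).
So the projection of `B` contains `n - 1` points and meets each of the `n - 2` gaps between them.
-/

theorem Finset.two_mul_card_le_card_add_one_of_exists_mem_Ioo {α : Type*} [LinearOrder α]
    {A T : Finset α} (hAT : A ⊆ T) (hIoo : ∀ a ∈ A, ∀ b ∈ A, a < b → ∃ t ∈ T, t ∈ Set.Ioo a b) :
    2 * A.card ≤ T.card + 1 := by
  induction A using Finset.induction_on_max generalizing T with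
  | empty => simp
  | insert m A hlt ih =>
    rw [card_insert_of_notMem fun h => (hlt m h).false]
    obtain rfl | hA := A.eq_empty_or_nonempty
    · simpa using card_pos.mpr ⟨m, hAT (mem_insert_self m ∅)⟩
    set M := A.max' hA
    obtain ⟨t, htT, ht⟩ := hIoo M (mem_insert_of_mem (A.max'_mem hA)) m (mem_insert_self m A)
      (hlt M (A.max'_mem hA))
    have hbelow := ih (T := T.filter (· ≤ M))
      (fun a ha => mem_filter.mpr ⟨hAT (mem_insert_of_mem ha), A.le_max' a ha⟩)
      fun a ha b hb hab => by
        obtain ⟨s, hsT, hs⟩ := hIoo a (mem_insert_of_mem ha) b (mem_insert_of_mem hb) hab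
        exact ⟨s, mem_filter.mpr ⟨hsT, hs.2.le.trans (A.le_max' b hb)⟩, hs⟩
    have habove : {t, m} ⊆ T.filter (fun x => ¬ x ≤ M) := by
      simp only [insert_subset_iff, singleton_subset_iff, mem_filter, not_le]
      exact ⟨⟨htT, ht.1⟩, hAT (mem_insert_self m A), hlt M (A.max'_mem hA)⟩
    have := card_le_card habove
    rw [card_pair ht.2.ne] at this
    have := card_filter_add_card_filter_not (s := T) (p := (· ≤ M))
    omega

section CentralProjection

variable {𝕜 E : Type*} [Field 𝕜] [LinearOrder 𝕜] [IsStrictOrderedRing 𝕜] [AddCommGroup E]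
  [Module 𝕜 E] (f g : E →ₗ[𝕜] 𝕜)

/-- The coordinate `g` of the central projection from `p` of `x` onto the hyperplane
`f (· - p) = 1`. -/
def centralProj (p x : E) : 𝕜 := g (x - p) / f (x - p)

theorem centralProj_of_mem_openSegment {p x z : E} (hz : z ∈ openSegment 𝕜 p x) :
    centralProj f g p z = centralProj f g p x := by
  rw [openSegment_eq_image'] at hz
  obtain ⟨θ, hθ, rfl⟩ := hz
  simp only [centralProj, add_sub_cancel_left, map_smul, smul_eq_mul]
  exact mul_div_mul_left _ _ hθ.1.ne'

theorem centralProj_mem_Ioo_of_mem_openSegment {p x y z : E} (hx : 0 < f (x - p))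
    (hy : 0 < f (y - p)) (hxy : centralProj f g p x < centralProj f g p y)
    (hz : z ∈ openSegment 𝕜 x y) :
    centralProj f g p z ∈ Set.Ioo (centralProj f g p x) (centralProj f g p y) := by
  obtain ⟨s, t, hs, ht, hst, rfl⟩ := hz
  have hzp : s • x + t • y - p = s • (x - p) + t • (y - p) := by
    linear_combination (norm := module) hst • p
  unfold centralProj at *
  simp only [hzp, map_add, map_smul, smul_eq_mul]
  rw [div_lt_div_iff₀ hx hy] at hxy
  have hsum : 0 < s * f (x - p) + t * f (y - p) := by positivity
  constructor
  · rw [div_lt_div_iff₀ hx hsum]; nlinarith [mul_pos ht (sub_pos.2 hxy)]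
  · rw [div_lt_div_iff₀ hsum hy]; nlinarith [mul_pos hs (sub_pos.2 hxy)]

end CentralProjection

def tiltedHeight (c : ℝ) : ℝ × ℝ →ₗ[ℝ] ℝ := LinearMap.snd ℝ ℝ ℝ + c • LinearMap.fst ℝ ℝ ℝ

@[simp]
theorem tiltedHeight_apply (c : ℝ) (u : ℝ × ℝ) : tiltedHeight c u = u.2 + c * u.1 := rfl

theorem exists_injOn_tiltedHeight (P : Finset (ℝ × ℝ)) : ∃ c, Set.InjOn (tiltedHeight c) P := by
  obtain ⟨c, hc⟩ := Infinite.exists_notMem_finset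
    ((P ×ˢ P).image fun x => (x.1.2 - x.2.2) / (x.2.1 - x.1.1))
  refine ⟨c, fun u hu w hw huw => ?_⟩
  simp only [tiltedHeight_apply] at huw
  by_cases h1 : u.1 = w.1
  · exact Prod.ext h1 (by rw [h1] at huw; linarith)
  · refine absurd (mem_image.mpr ⟨(u, w), mem_product.mpr ⟨hu, hw⟩, ?_⟩) hc
    rw [div_eq_iff (sub_ne_zero.mpr (Ne.symm h1))]
    linarith

theorem eq_smul_of_fst_div_tiltedHeight_eq {c : ℝ} {u w : ℝ × ℝ} (hu : tiltedHeight c u ≠ 0)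
    (hw : tiltedHeight c w ≠ 0) (h : u.1 / tiltedHeight c u = w.1 / tiltedHeight c w) :
    w = (tiltedHeight c w / tiltedHeight c u) • u := by
  simp only [tiltedHeight_apply] at *
  rw [div_eq_div_iff hu hw] at h
  ext <;> simp only [Prod.smul_fst, Prod.smul_snd, smul_eq_mul] <;> field_simp
  · linear_combination -h
  · linear_combination c * h

theorem GenPos.injOn_centralProj {P : Finset (ℝ × ℝ)} (hgp : GenPos P) {p : ℝ × ℝ} {c : ℝ}
    (hp : p ∈ P) (hc : ∀ q ∈ P, q ≠ p → tiltedHeight c (q - p) ≠ 0) :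
    Set.InjOn (centralProj (tiltedHeight c) (LinearMap.fst ℝ ℝ ℝ) p) (P.erase p) := by
  intro q hq r hr hqr
  obtain ⟨hqp, hqP⟩ := mem_erase.mp hq
  obtain ⟨hrp, hrP⟩ := mem_erase.mp hr
  by_contra hne
  have hline : r ∈ line[ℝ, p, q] := by
    have := smul_vsub_vadd_mem_affineSpan_pair (k := ℝ)
      (tiltedHeight c (r - p) / tiltedHeight c (q - p)) p q
    rwa [vsub_eq_sub, vadd_eq_add, ← eq_smul_of_fst_div_tiltedHeight_eq (hc q hqP hqp)
      (hc r hrP hrp) hqr, sub_add_cancel] at this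
  refine hgp p hp q hqP r hrP (Ne.symm hqp) (Ne.symm hrp) hne ?_
  rw [Set.pair_comm, Set.insert_comm]
  exact collinear_insert_of_mem_affineSpan_pair hline

theorem blocking_set_lower_bound_general (n : ℕ) (P B : Finset (ℝ × ℝ))
    (hcard : P.card = n) (hgp : GenPos (P : Set (ℝ × ℝ)))
    (hB : Blocks (B : Set (ℝ × ℝ)) (P : Set (ℝ × ℝ))) :
    2 * n - 3 ≤ B.card := by
  classical
  obtain rfl | hPne := P.eq_empty_or_nonempty
  · simp [← hcard]
  obtain ⟨c, hc⟩ := exists_injOn_tiltedHeight P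
  obtain ⟨p, hp, hpmin⟩ := P.exists_min_image (tiltedHeight c) hPne
  have hpos : ∀ q ∈ P, q ≠ p → 0 < tiltedHeight c (q - p) := fun q hq hqp => by
    rw [map_sub, sub_pos]
    exact (hpmin q hq).lt_of_ne fun h => hqp (hc hq hp h.symm)
  set κ := centralProj (tiltedHeight c) (LinearMap.fst ℝ ℝ ℝ) p
  have hsub : (P.erase p).image κ ⊆ B.image κ := by
    simp only [subset_iff, mem_image, mem_erase]
    rintro _ ⟨q, ⟨hqp, hq⟩, rfl⟩
    obtain ⟨b, hb, hbpq⟩ := hB.2 p hp q hq (Ne.symm hqp)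
    exact ⟨b, hb, centralProj_of_mem_openSegment _ _ hbpq⟩
  have hIoo : ∀ a ∈ (P.erase p).image κ, ∀ a' ∈ (P.erase p).image κ, a < a' →
      ∃ t ∈ B.image κ, t ∈ Set.Ioo a a' := by
    simp only [mem_image, mem_erase]
    rintro _ ⟨q, ⟨hqp, hq⟩, rfl⟩ _ ⟨r, ⟨hrp, hr⟩, rfl⟩ hlt
    obtain ⟨b, hb, hbqr⟩ := hB.2 q hq r hr (fun h => hlt.ne (congrArg κ h))
    exact ⟨κ b, ⟨b, hb, rfl⟩, centralProj_mem_Ioo_of_mem_openSegment _ _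
      (hpos q hq hqp) (hpos r hr hrp) hlt hbqr⟩
  have hcount := Finset.two_mul_card_le_card_add_one_of_exists_mem_Ioo hsub hIoo
  rw [card_image_of_injOn (hgp.injOn_centralProj hp fun q hq hqp => (hpos q hq hqp).ne'),
    card_erase_of_mem hp, hcard] at hcount
  have := card_image_le (s := B) (f := κ)
  omega

/-- Every blocking set of `n ≥ 3` points in general position has at least `2n - 3` points. -/
theorem blocking_set_lower_bound (n : ℕ) (hn : 3 ≤ n) (P B : Finset (ℝ × ℝ))
    (hcard : P.card = n) (hgp : GenPos (P : Set (ℝ × ℝ)))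
    (hB : Blocks (B : Set (ℝ × ℝ)) (P : Set (ℝ × ℝ))) :
    2 * n - 3 ≤ B.card :=
  blocking_set_lower_bound_general n P B hcard hgp hB
end

section
/- Let n ≥ 1 and place v_i = (-2^i, 2^{2i}) and w_j = (2^j, 2^{2j}) for i, j ∈ {1,...,n}. Then the point (0, 2^{i+j}) lies in the open segment from v_i to w_j for all i, j, so the set {(0, 2^k) : k ∈ {2,...,2n}} of 2n - 1 points blocks this geometric drawing of K_{n,n}. Moreover the 2n points v_1,...,v_n, w_1,...,w_n are in general position (no three collinear). -/
/-!
The chord of the parabola `y = x²` between the points with abscissae `a < 0 < b` crosses the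
`y`-axis at height `-a b`; for `a = -2^i`, `b = 2^j` this is `2^(i+j)`, so the `2n - 1` heights
`2^2, …, 2^(2n)` block every edge. Three distinct points `(x, x²)` are never collinear, since
the cross product of the two difference vectors is the Vandermonde product
`(b - a)(c - a)(c - b)`.
-/

open Finset

theorem Collinear.cross_eq {p q r : ℝ × ℝ} (h : Collinear ℝ ({p, q, r} : Set (ℝ × ℝ))) :
    (q.1 - p.1) * (r.2 - p.2) = (q.2 - p.2) * (r.1 - p.1) := by
  obtain ⟨d, hd⟩ := (collinear_iff_of_mem (Set.mem_insert p _)).1 h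
  obtain ⟨s, rfl⟩ := hd q (by simp)
  obtain ⟨t, rfl⟩ := hd r (by simp)
  simp only [vadd_eq_add, Prod.fst_add, Prod.snd_add, Prod.smul_fst, Prod.smul_snd, smul_eq_mul]
  ring

theorem not_collinear_parabola {a b c : ℝ} (hab : a ≠ b) (hac : a ≠ c) (hbc : b ≠ c) :
    ¬ Collinear ℝ ({(a, a ^ 2), (b, b ^ 2), (c, c ^ 2)} : Set (ℝ × ℝ)) := by
  intro h
  have hvdm : (b - a) * (c - a) * (c - b) = 0 := by linear_combination h.cross_eq
  simp only [mul_eq_zero, sub_eq_zero] at hvdm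
  tauto

theorem mem_openSegment_parabola {a b : ℝ} (ha : a < 0) (hb : 0 < b) :
    ((0 : ℝ), -a * b) ∈ openSegment ℝ (a, a ^ 2) (b, b ^ 2) := by
  have hba : 0 < b - a := by linarith
  refine ⟨b / (b - a), -a / (b - a), by positivity, div_pos (neg_pos.2 ha) hba,
    by field_simp; ring, ?_⟩
  simp only [Prod.smul_mk, smul_eq_mul, Prod.mk_add_mk, Prod.mk.injEq]
  constructor <;> field_simp <;> ring

theorem parabola_Knn_blocked_general (n : ℕ)
    (v w : ℕ → ℝ × ℝ)
    (hv : ∀ i, v i = (-(2 : ℝ) ^ i, (2 : ℝ) ^ (2 * i)))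
    (hw : ∀ j, w j = ((2 : ℝ) ^ j, (2 : ℝ) ^ (2 * j)))
    (B : Finset (ℝ × ℝ))
    (hB : B = (Finset.Icc 2 (2 * n)).image (fun k : ℕ => ((0 : ℝ), (2 : ℝ) ^ k))) :
    (∀ i ∈ Finset.Icc 1 n, ∀ j ∈ Finset.Icc 1 n,
      ((0 : ℝ), (2 : ℝ) ^ (i + j)) ∈ openSegment ℝ (v i) (w j)) ∧
    B.card = 2 * n - 1 ∧
    (∀ b ∈ B, ∀ i ∈ Finset.Icc 1 n, b ≠ v i ∧ b ≠ w i) ∧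
    (∀ i ∈ Finset.Icc 1 n, ∀ j ∈ Finset.Icc 1 n,
      ∃ b ∈ B, b ∈ openSegment ℝ (v i) (w j)) ∧
    (∀ p ∈ (Finset.Icc 1 n).image v ∪ (Finset.Icc 1 n).image w,
     ∀ q ∈ (Finset.Icc 1 n).image v ∪ (Finset.Icc 1 n).image w,
     ∀ r ∈ (Finset.Icc 1 n).image v ∪ (Finset.Icc 1 n).image w,
      p ≠ q → p ≠ r → q ≠ r → ¬ Collinear ℝ {p, q, r}) := by
  have hv' (i : ℕ) : v i = (-2 ^ i, (-2 ^ i) ^ 2) := by rw [hv]; ring_nf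
  have hw' (j : ℕ) : w j = (2 ^ j, (2 ^ j) ^ 2) := by rw [hw]; ring_nf
  have hseg (i j : ℕ) : ((0 : ℝ), (2 : ℝ) ^ (i + j)) ∈ openSegment ℝ (v i) (w j) := by
    rw [hv', hw']
    convert mem_openSegment_parabola (a := -2 ^ i) (b := 2 ^ j) (by simp) (by positivity)
      using 2
    ring
  have hparabola : ∀ p ∈ (Finset.Icc 1 n).image v ∪ (Finset.Icc 1 n).image w,
      ∃ x : ℝ, p = (x, x ^ 2) := by
    simp only [mem_union, mem_image]
    rintro p (⟨i, -, rfl⟩ | ⟨i, -, rfl⟩)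
    exacts [⟨_, hv' i⟩, ⟨_, hw' i⟩]
  refine ⟨fun i _ j _ => hseg i j, ?_, ?_, ?_, ?_⟩
  · have hinj : Function.Injective (fun k : ℕ => ((0 : ℝ), (2 : ℝ) ^ k)) :=
      (Prod.mk_right_injective 0).comp (pow_right_injective₀ (by norm_num) (by norm_num))
    rw [hB, card_image_of_injective _ hinj, Nat.card_Icc]
    omega
  · rw [hB]
    rintro _ hb i -
    obtain ⟨k, -, rfl⟩ := mem_image.1 hb
    have : (0 : ℝ) < 2 ^ i := by positivity
    simp only [hv', hw', ne_eq, Prod.mk.injEq, not_and]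
    constructor <;> intro h <;> linarith
  · intro i hi j hj
    refine ⟨_, ?_, hseg i j⟩
    simp only [mem_Icc] at hi hj
    exact hB ▸ mem_image.2 ⟨i + j, mem_Icc.2 (by omega), rfl⟩
  · intro p hp q hq r hr hpq hpr hqr
    obtain ⟨x, rfl⟩ := hparabola p hp
    obtain ⟨y, rfl⟩ := hparabola q hq
    obtain ⟨z, rfl⟩ := hparabola r hr
    exact not_collinear_parabola (fun h => hpq (h ▸ rfl)) (fun h => hpr (h ▸ rfl))
      (fun h => hqr (h ▸ rfl))

/-- Parabola drawing of `K_{n,n}`: `v i = (-2^i, 2^(2i))`, `w j = (2^j, 2^(2j))`.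
The point `(0, 2^(i+j))` blocks edge `v i w j`; the `2n - 1` points `(0, 2^k)`,
`k ∈ {2, …, 2n}`, block the drawing and are not vertices; moreover the `2n` vertices
are in general position. -/
theorem parabola_Knn_blocked (n : ℕ) (hn : 1 ≤ n)
    (v w : ℕ → ℝ × ℝ)
    (hv : ∀ i, v i = (-(2 : ℝ) ^ i, (2 : ℝ) ^ (2 * i)))
    (hw : ∀ j, w j = ((2 : ℝ) ^ j, (2 : ℝ) ^ (2 * j)))
    (B : Finset (ℝ × ℝ))
    (hB : B = (Finset.Icc 2 (2 * n)).image (fun k : ℕ => ((0 : ℝ), (2 : ℝ) ^ k))) :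
    (∀ i ∈ Finset.Icc 1 n, ∀ j ∈ Finset.Icc 1 n,
      ((0 : ℝ), (2 : ℝ) ^ (i + j)) ∈ openSegment ℝ (v i) (w j)) ∧
    B.card = 2 * n - 1 ∧
    (∀ b ∈ B, ∀ i ∈ Finset.Icc 1 n, b ≠ v i ∧ b ≠ w i) ∧
    (∀ i ∈ Finset.Icc 1 n, ∀ j ∈ Finset.Icc 1 n,
      ∃ b ∈ B, b ∈ openSegment ℝ (v i) (w j)) ∧
    (∀ p ∈ (Finset.Icc 1 n).image v ∪ (Finset.Icc 1 n).image w,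
     ∀ q ∈ (Finset.Icc 1 n).image v ∪ (Finset.Icc 1 n).image w,
     ∀ r ∈ (Finset.Icc 1 n).image v ∪ (Finset.Icc 1 n).image w,
      p ≠ q → p ≠ r → q ≠ r → ¬ Collinear ℝ {p, q, r}) :=
  parabola_Knn_blocked_general n v w hv hw B hB
end

section
/- Let S = {s_1, ..., s_n} be a set of n positive reals, and place v_i = (-s_i, s_i²) and w_j = (s_j, s_j²). Then the straight segment from v_i to w_j crosses the y-axis exactly at the point (0, s_i · s_j). Consequently the point set {(0, p) : p ∈ S·S} blocks all edges v_i w_j, so this drawing of K_{n,n} can be blocked by |S·S| points, where S·S := {ab : a, b ∈ S}. -/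
open Finset Pointwise

/-! The chord of `y = x²` from `(-a, a²)` to `(b, b²)` is the line `y = (b - a) x + a b`,
so it meets the y-axis at `(0, a b)`; for `a, b > 0` that point lies strictly between the
endpoints, with weights `b / (a + b)` and `a / (a + b)`. -/

lemma mk_zero_mul_mem_openSegment_parabola {a b : ℝ} (ha : 0 < a) (hb : 0 < b) :
    ((0 : ℝ), a * b) ∈ openSegment ℝ ((-a, a ^ 2) : ℝ × ℝ) (b, b ^ 2) := by
  have hab : 0 < a + b := ha.trans (lt_add_of_pos_right a hb)
  refine ⟨b / (a + b), a / (a + b), div_pos hb hab, div_pos ha hab, ?_, ?_⟩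
  · field_simp
    ring
  · ext <;> simp only [Prod.smul_mk, Prod.fst_add, Prod.snd_add, smul_eq_mul] <;> field_simp
    ring

lemma eq_mul_of_mk_zero_mem_segment_parabola {a b y : ℝ}
    (h : ((0 : ℝ), y) ∈ segment ℝ ((-a, a ^ 2) : ℝ × ℝ) (b, b ^ 2)) : y = a * b := by
  obtain ⟨t, s, -, -, hts, heq⟩ := h
  have hx : t * -a + s * b = 0 := congrArg Prod.fst heq
  have hy : t * a ^ 2 + s * b ^ 2 = y := congrArg Prod.snd heq
  -- `y - a b = (a - b) (t a - s b)` once `t + s = 1`, and `t a = s b` is the first coordinate.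
  linear_combination -hy + a * b * hts + (b - a) * hx

/-- Drawing `K_{n,n}` on the parabola using a set `S` of positive reals:
the edge from `(-a, a²)` to `(b, b²)` crosses the y-axis exactly at `(0, ab)`,
so the points `{(0, p) : p ∈ S·S}` (none of which is a vertex) block all edges. -/
theorem parabola_product_set_blocks (S : Finset ℝ) (hpos : ∀ a ∈ S, 0 < a) :
    (∀ a ∈ S, ∀ b ∈ S,
      ((0 : ℝ), a * b) ∈ openSegment ℝ (-a, a ^ 2) (b, b ^ 2) ∧
      ∀ y : ℝ, ((0 : ℝ), y) ∈ openSegment ℝ (-a, a ^ 2) (b, b ^ 2) → y = a * b) ∧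
    (∀ p ∈ S * S, ∀ a ∈ S, ((0 : ℝ), p) ≠ (-a, a ^ 2) ∧ ((0 : ℝ), p) ≠ (a, a ^ 2)) ∧
    (∀ a ∈ S, ∀ b ∈ S,
      ∃ p ∈ S * S, ((0 : ℝ), p) ∈ openSegment ℝ (-a, a ^ 2) (b, b ^ 2)) := by
  have crosses : ∀ a ∈ S, ∀ b ∈ S, ((0 : ℝ), a * b) ∈ openSegment ℝ (-a, a ^ 2) (b, b ^ 2) :=
    fun a ha b hb => mk_zero_mul_mem_openSegment_parabola (hpos a ha) (hpos b hb)
  refine ⟨fun a ha b hb => ⟨crosses a ha b hb, fun y hy => ?_⟩, fun p _ a ha => ?_,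
    fun a ha b hb => ⟨a * b, mul_mem_mul ha hb, crosses a ha b hb⟩⟩
  · exact eq_mul_of_mk_zero_mem_segment_parabola (openSegment_subset_segment ℝ _ _ hy)
  · have ha0 := (hpos a ha).ne'
    exact ⟨fun h => ha0 (neg_eq_zero.mp (congrArg Prod.fst h).symm),
      fun h => ha0 (congrArg Prod.fst h).symm⟩
end

section
/- Every set B that blocks a simple (or geometric) drawing of the complete graph K_n (n ≥ 2) satisfies |B| ≥ n - 1, since each blocking point can block at most ⌊n/2⌋ edges. -/
open Finset

/-! Each blocker `b` lies on at most one edge at each vertex `v`: two edges `vw`, `vw'` through `b`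
make `v, w, w'` collinear. So `b` blocks at most `n` ordered pairs of vertices, while all
`n (n - 1)` ordered pairs must be blocked. -/

theorem collinear_of_mem_openSegment_of_mem_openSegment {𝕜 E : Type*} [Field 𝕜] [LinearOrder 𝕜]
    [IsStrictOrderedRing 𝕜] [AddCommGroup E] [Module 𝕜 E] {v w w' b : E}
    (h : b ∈ openSegment 𝕜 v w) (h' : b ∈ openSegment 𝕜 v w') : Collinear 𝕜 {v, w, w'} := by
  rw [openSegment_eq_image'] at h h'
  obtain ⟨s, -, rfl⟩ := h
  obtain ⟨t, ⟨ht, -⟩, hts⟩ := h'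
  have hts' : t • (w' - v) = s • (w - v) := add_left_cancel hts
  have hw' : w' = AffineMap.lineMap v w (s / t) := by
    rw [AffineMap.lineMap_apply, vsub_eq_sub, vadd_eq_add, div_eq_inv_mul, mul_smul, ← hts',
      inv_smul_smul₀ ht.ne', sub_add_cancel]
  rw [Set.pair_comm, Set.insert_comm]
  exact collinear_insert_of_mem_affineSpan_pair (hw' ▸ AffineMap.lineMap_mem_affineSpan_pair _ _ _)

open Classical in
theorem card_filter_mem_openSegment_le {P : Finset (ℝ × ℝ)} (hP : GenPos (P : Set (ℝ × ℝ)))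
    (b : ℝ × ℝ) : #{e ∈ P.offDiag | b ∈ openSegment ℝ e.1 e.2} ≤ #P := by
  refine card_le_card_of_injOn Prod.fst (fun e he => (mem_offDiag.1 (mem_filter.1 he).1).1) ?_
  rintro ⟨v, w⟩ he ⟨v', w'⟩ he' (rfl : v = v')
  simp only [coe_filter, mem_offDiag, Set.mem_ofPred_eq] at he he'
  by_contra hne
  exact hP v he.1.1 w he.1.2.1 w' he'.1.2.1 he.1.2.2 he'.1.2.2 (fun hw => hne (by rw [hw]))
    (collinear_of_mem_openSegment_of_mem_openSegment he.2 he'.2)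

theorem blockers_at_least_n_sub_one_general (n : ℕ) (P B : Finset (ℝ × ℝ))
    (hcard : P.card = n) (hgp : GenPos (P : Set (ℝ × ℝ)))
    (hB : Blocks (B : Set (ℝ × ℝ)) (P : Set (ℝ × ℝ))) :
    n - 1 ≤ B.card := by
  classical
  have hcover : P.offDiag ⊆ B.biUnion fun b => {e ∈ P.offDiag | b ∈ openSegment ℝ e.1 e.2} := by
    intro e he
    obtain ⟨hv, hw, hvw⟩ := mem_offDiag.1 he
    obtain ⟨b, hbB, hb⟩ := hB.2 e.1 hv e.2 hw hvw
    exact mem_biUnion.2 ⟨b, hbB, mem_filter.2 ⟨he, hb⟩⟩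
  have hcount : (n - 1) * n ≤ #B * n := calc
    (n - 1) * n = #P.offDiag := by rw [offDiag_card, hcard, Nat.sub_one_mul]
    _ ≤ #(B.biUnion _) := card_le_card hcover
    _ ≤ #B * n := card_biUnion_le_card_mul _ _ _ fun b _ =>
      hcard ▸ card_filter_mem_openSegment_le hgp b
  rcases n.eq_zero_or_pos with rfl | hn
  · exact Nat.zero_le _
  · exact Nat.le_of_mul_le_mul_right hcount hn

/-- Any set blocking a simple geometric drawing of `K_n` (`n ≥ 2`, vertices in general
position so that any two edges intersect at most once) has at least `n - 1` points,
since each point blocks at most `⌊n/2⌋` edges. -/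
theorem blockers_at_least_n_sub_one (n : ℕ) (hn : 2 ≤ n) (P B : Finset (ℝ × ℝ))
    (hcard : P.card = n) (hgp : GenPos (P : Set (ℝ × ℝ)))
    (hB : Blocks (B : Set (ℝ × ℝ)) (P : Set (ℝ × ℝ))) :
    n - 1 ≤ B.card :=
  blockers_at_least_n_sub_one_general n P B hcard hgp hB
end

section
/- Let P be a set of n points in general position in the plane, and let B block P. If T is any triangulation of P (a maximal set of pairwise non-crossing open segments between points of P), then distinct edges of T require distinct blockers, hence |B| ≥ |T|. -/
open Finset

theorem Finset.card_le_card_of_pairwiseDisjoint_meet {ι α : Type*}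
    (s : Finset ι) (B : Finset α) (S : ι → Set α)
    (hS : (s : Set ι).PairwiseDisjoint S) (hmeet : ∀ i ∈ s, ∃ b ∈ B, b ∈ S i) :
    #s ≤ #B := by
  classical
  let hit : ι → Finset α := fun i => {b ∈ B | b ∈ S i}
  have hhit : (s : Set ι).PairwiseDisjoint hit := fun i hi j hj hij =>
    Finset.disjoint_left.2 fun b hbi hbj =>
      Set.disjoint_left.1 (hS hi hj hij) (Finset.mem_filter.1 hbi).2 (Finset.mem_filter.1 hbj).2
  calc #s ≤ #(s.biUnion hit) :=
        card_le_card_biUnion hhit fun i hi => filter_nonempty_iff.2 (hmeet i hi)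
    _ ≤ #B := card_le_card (biUnion_subset.2 fun _ _ => filter_subset _ _)

theorem triangulation_blocking_lower_bound_general (P B : Finset (ℝ × ℝ))
    (hB : Blocks (B : Set (ℝ × ℝ)) (P : Set (ℝ × ℝ)))
    (T : Finset ((ℝ × ℝ) × (ℝ × ℝ)))
    (hT : ∀ e ∈ T, e.1 ∈ P ∧ e.2 ∈ P ∧ e.1 ≠ e.2)
    (hdisj : ∀ e ∈ T, ∀ f ∈ T, e ≠ f →
      Disjoint (openSegment ℝ e.1 e.2) (openSegment ℝ f.1 f.2)) :
    T.card ≤ B.card := by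
  refine card_le_card_of_pairwiseDisjoint_meet T B (fun e => openSegment ℝ e.1 e.2)
    (fun e he f hf hef => hdisj e he f hf hef) fun e he => ?_
  obtain ⟨he₁, he₂, hne⟩ := hT e he
  exact hB.2 e.1 he₁ e.2 he₂ hne

/-- If `T` is a set of edges between points of `P` (in general position) whose open
segments are pairwise disjoint — e.g. the edges of a triangulation of `P` — then any
blocking set `B` of `P` satisfies `|B| ≥ |T|`, since distinct edges need distinct
blockers. -/
theorem triangulation_blocking_lower_bound (P B : Finset (ℝ × ℝ))
    (hgp : GenPos (P : Set (ℝ × ℝ)))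
    (hB : Blocks (B : Set (ℝ × ℝ)) (P : Set (ℝ × ℝ)))
    (T : Finset ((ℝ × ℝ) × (ℝ × ℝ)))
    (hT : ∀ e ∈ T, e.1 ∈ P ∧ e.2 ∈ P ∧ e.1 ≠ e.2)
    (hdisj : ∀ e ∈ T, ∀ f ∈ T, e ≠ f →
      Disjoint (openSegment ℝ e.1 e.2) (openSegment ℝ f.1 f.2)) :
    T.card ≤ B.card :=
  triangulation_blocking_lower_bound_general P B hB T hT hdisj
end

section
/- For the point set P = {(-2^i, 2^{2i}) : 1 ≤ i ≤ n} ∪ {(2^i, 2^{2i}) : 1 ≤ i ≤ n} in convex position, for each k with 2 ≤ k ≤ 2n, the point (0, 2^k) blocks every segment from (-2^i, 2^{2i}) to (2^j, 2^{2j}) with i + j = k; in particular there exist Ω(n) points each blocking Ω(n) of the segments of P. -/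
/-!
The segment from `(-a, a²)` to `(b, b²)` on the parabola `y = x²` crosses the `y`-axis at
height `a * b`, with weights `b / (a + b)` and `a / (a + b)`. Taking `a = 2^i`, `b = 2^j`
gives height `2^(i+j)`, so `(0, 2^k)` blocks all chords with `i + j = k`; for
`k ≤ n + 1` there are `k - 1` of them.
-/

open Finset

theorem zero_mul_mem_openSegment_parabola {𝕜 : Type*} [Field 𝕜] [LinearOrder 𝕜]
    [IsStrictOrderedRing 𝕜] {a b : 𝕜} (ha : 0 < a) (hb : 0 < b) :
    ((0 : 𝕜), a * b) ∈ openSegment 𝕜 (-a, a ^ 2) (b, b ^ 2) := by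
  have hab : a + b ≠ 0 := (add_pos ha hb).ne'
  refine ⟨b / (a + b), a / (a + b), by positivity, by positivity,
    by rw [← add_div, add_comm, div_self hab], ?_⟩
  ext <;> simp only [Prod.smul_mk, Prod.mk_add_mk, smul_eq_mul]
  · field_simp
    ring
  · field_simp

theorem sub_one_le_card_filter_add_eq {n k : ℕ} (hk : k ≤ n + 1) :
    k - 1 ≤ #{p ∈ Icc 1 n ×ˢ Icc 1 n | p.1 + p.2 = k} := by
  have hinj : Set.InjOn (fun i => (i, k - i)) (Icc 1 (k - 1) : Set ℕ) :=
    fun _ _ _ _ h => (Prod.mk.inj h).1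
  calc k - 1 = #(Icc 1 (k - 1)) := by simp
    _ ≤ _ := card_le_card_of_injOn _ (fun i hi => by
      simp only [coe_Icc, Set.mem_Icc, coe_filter, mem_product, mem_Icc, Set.mem_ofPred_eq] at hi ⊢
      omega) hinj

/-- For the convex-position point set `{(-2^i, 2^(2i))} ∪ {(2^i, 2^(2i))}`, the point
`(0, 2^k)` blocks every segment from `(-2^i, 2^(2i))` to `(2^j, 2^(2j))` with `i + j = k`;
in particular there are at least `n/2` values of `k` for which `(0, 2^k)` blocks at
least `n/2` of the segments. -/
theorem parabola_point_blocks_many (n : ℕ) :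
    (∀ k ∈ Finset.Icc 2 (2 * n), ∀ i ∈ Finset.Icc 1 n, ∀ j ∈ Finset.Icc 1 n,
      i + j = k →
      ((0 : ℝ), (2 : ℝ) ^ k) ∈
        openSegment ℝ (-(2 : ℝ) ^ i, (2 : ℝ) ^ (2 * i)) ((2 : ℝ) ^ j, (2 : ℝ) ^ (2 * j))) ∧
    (∃ K ⊆ Finset.Icc 2 (2 * n), n / 2 ≤ K.card ∧ ∀ k ∈ K,
      n / 2 ≤ ((Finset.Icc 1 n ×ˢ Finset.Icc 1 n).filter
        (fun p => p.1 + p.2 = k)).card) := by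
  refine ⟨fun k _ i _ j _ hij => ?_, Icc (n / 2 + 2) (n + 1), ?_, ?_, ?_⟩
  · rw [← hij, pow_add, pow_mul', pow_mul']
    exact zero_mul_mem_openSegment_parabola (by positivity) (by positivity)
  · intro k hk
    simp only [mem_Icc] at hk ⊢
    omega
  · rw [Nat.card_Icc]
    omega
  · intro k hk
    rw [mem_Icc] at hk
    exact le_trans (by omega) (sub_one_le_card_filter_add_eq hk.2)
end

section
/- There exists a simple (non-geometric) drawing of K_n in the plane that can be blocked by 2n - 3 points: place vertex v_i at (i, 0), route edge v_i v_j (i < j) through the point (-i-j, 0), and take the blockers {(-k, 0) : 3 ≤ k ≤ 2n - 1}; each of these 2n - 3 points blocks all edges v_i v_j with i + j = k. -/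
open Finset

/-!
Put the vertices at `(x, 0)` with `x > 0` and draw the edge between `u < v` as the upper half of
the circle with diameter `[-(u + v), u]` followed by the lower half of the circle with diameter
`[-(u + v), v]`; it passes through `(-(u + v), 0)`, so the points `(-k, 0)` block every edge.

Two half circles on the same side of the axis whose centres differ meet at most once, since
their common points lie on one vertical line, and half circles on opposite sides meet only on the
axis. For edges `uv`, `u'v'` with `s = u + v` and `s' = u' + v'`: if `s = s'`, all four half
circles pass through `(-s, 0)`, which is then the only common point. If `s < s'`, the upper halves
can meet only if `u' ≤ u` (otherwise the circles are nested), the lower halves only if `v' ≤ v`,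
and an upper half of one edge meets a lower half of the other only at a common vertex `v = u'`;
any two of these conditions contradict `s < s'`.
-/

open Function Set Real

/-- The closed half, on the side `0 ≤ ε * y`, of the circle with diameter `[a, b]`. -/
def semicircle (a b ε : ℝ) : Set (ℝ × ℝ) :=
  {z | (z.1 - a) * (z.1 - b) + z.2 ^ 2 = 0 ∧ 0 ≤ ε * z.2}

section Semicircle

variable {a b c d ε : ℝ} {z : ℝ × ℝ}

lemma semicircle_comm (a b ε : ℝ) : semicircle a b ε = semicircle b a ε := by
  ext z
  simp only [semicircle, mem_ofPred_eq, mul_comm (z.1 - a)]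

lemma left_mem_semicircle (a b ε : ℝ) : ((a, 0) : ℝ × ℝ) ∈ semicircle a b ε := by
  simp [semicircle]

lemma right_mem_semicircle (a b ε : ℝ) : ((b, 0) : ℝ × ℝ) ∈ semicircle a b ε :=
  semicircle_comm a b ε ▸ left_mem_semicircle b a ε

lemma fst_eq_or_eq_of_mem_semicircle (hz : z ∈ semicircle a b ε) (h : z.2 = 0) :
    z.1 = a ∨ z.1 = b := by
  have : (z.1 - a) * (z.1 - b) = 0 := by simpa [h] using hz.1
  rcases mul_eq_zero.1 this with h | h
  exacts [.inl (sub_eq_zero.1 h), .inr (sub_eq_zero.1 h)]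

lemma mem_axis_of_mem_semicircle_neg (hε : ε ≠ 0) (hz : z ∈ semicircle a b ε)
    (hz' : z ∈ semicircle c d (-ε)) :
    z.2 = 0 ∧ (z.1 = a ∨ z.1 = b) ∧ (z.1 = c ∨ z.1 = d) := by
  have h0 : z.2 = 0 :=
    (mul_eq_zero.1 (le_antisymm (by linarith [hz'.2]) hz.2)).resolve_left hε
  exact ⟨h0, fst_eq_or_eq_of_mem_semicircle hz h0, fst_eq_or_eq_of_mem_semicircle hz' h0⟩

lemma semicircle_inter_subsingleton {a' b' : ℝ} (hε : ε ≠ 0) (h : a + b ≠ a' + b') :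
    (semicircle a b ε ∩ semicircle a' b' ε).Subsingleton := by
  rintro z ⟨⟨hz, hzε⟩, hz', -⟩ w ⟨⟨hw, hwε⟩, hw', -⟩
  have hx : z.1 = w.1 := by
    have : (a' + b' - (a + b)) * (z.1 - w.1) = 0 := by linear_combination hz - hz' - hw + hw'
    exact sub_eq_zero.1 ((mul_eq_zero.1 this).resolve_left (sub_ne_zero.2 h.symm))
  have hy : z.2 ^ 2 = w.2 ^ 2 := by rw [hx] at hz; linarith
  have hεy : ε * z.2 = ε * w.2 := (sq_eq_sq₀ hzε hwε).1 (by rw [mul_pow, mul_pow, hy])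
  exact Prod.ext hx (mul_left_cancel₀ hε hεy)

lemma disjoint_semicircle_of_lt_of_lt {a' b' ε' : ℝ} (hab : a ≤ b) (ha : a' < a)
    (hb : b < b') :
    Disjoint (semicircle a b ε) (semicircle a' b' ε') := by
  rw [Set.disjoint_left]
  rintro z ⟨hz, -⟩ ⟨hz', -⟩
  have hza : a ≤ z.1 := by nlinarith [sq_nonneg z.2]
  have hzb : z.1 ≤ b := by nlinarith [sq_nonneg z.2]
  nlinarith [mul_le_mul_of_nonneg_left (by linarith : b - z.1 ≤ b' - z.1) (sub_nonneg.2 hza)]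

end Semicircle

/-- The counterclockwise half turn from `(p, 0)` to `(q, 0)` about their midpoint. -/
noncomputable def halfTurn (p q : ℝ) : Path ((p, 0) : ℝ × ℝ) (q, 0) where
  toFun t := ((p + q) / 2 + (p - q) / 2 * cos (π * t), (p - q) / 2 * sin (π * t))
  continuous_toFun := by fun_prop
  source' := by simp; ring
  target' := by simp; ring

section HalfTurn

variable {p q ε : ℝ}

lemma halfTurn_mem_semicircle (hε : 0 ≤ ε * (p - q)) (t : unitInterval) :
    halfTurn p q t ∈ semicircle p q ε := by
  have hsin : 0 ≤ sin (π * t) :=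
    sin_nonneg_of_nonneg_of_le_pi (by have := t.2.1; positivity) (by nlinarith [t.2.2, pi_pos])
  simp only [semicircle, halfTurn, Path.coe_mk_mk, mem_ofPred_eq]
  refine ⟨by linear_combination ((p - q) / 2) ^ 2 * sin_sq_add_cos_sq (π * t), ?_⟩
  nlinarith

lemma range_halfTurn_subset (hε : 0 ≤ ε * (p - q)) :
    range (halfTurn p q) ⊆ semicircle p q ε :=
  range_subset_iff.2 (halfTurn_mem_semicircle hε)

lemma halfTurn_injective (h : p ≠ q) : Injective (halfTurn p q) := by
  intro s t hst
  have hx : (p - q) / 2 * cos (π * s) = (p - q) / 2 * cos (π * t) := by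
    have := congrArg Prod.fst hst
    simp only [halfTurn, Path.coe_mk_mk] at this
    linarith
  have hcos := mul_left_cancel₀ (by intro h'; apply h; linarith) hx
  have hmem : ∀ r : unitInterval, π * r ∈ Icc 0 π := fun r =>
    ⟨by have := r.2.1; positivity, by nlinarith [r.2.2, pi_pos]⟩
  exact Subtype.ext (mul_left_cancel₀ pi_ne_zero (injOn_cos (hmem s) (hmem t) hcos))

end HalfTurn

lemma Path.trans_injective {X : Type*} [TopologicalSpace X] {x y z : X} {γ₁ : Path x y}
    {γ₂ : Path y z} (h₁ : Injective γ₁) (h₂ : Injective γ₂)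
    (h : range γ₁ ∩ range γ₂ ⊆ {y}) :
    Injective (γ₁.trans γ₂) := by
  have junction : ∀ s t, γ₁ s = γ₂ t → (t : ℝ) = 0 := by
    intro s t hst
    have hy : γ₂ t = y := h ⟨⟨s, hst⟩, t, rfl⟩
    exact congrArg Subtype.val (h₂ (hy.trans γ₂.source.symm))
  intro s t hst
  rw [Path.trans_apply, Path.trans_apply] at hst
  split_ifs at hst with hs ht ht
  · exact Subtype.ext (by simpa using congrArg Subtype.val (h₁ hst))
  · have := junction _ _ hst; simp only at this; linarith
  · have := junction _ _ hst.symm; simp only at this; linarith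
  · exact Subtype.ext (by simpa using congrArg Subtype.val (h₂ hst))

noncomputable def edgePath (u v : ℝ) : Path ((u, 0) : ℝ × ℝ) (v, 0) :=
  (halfTurn u (-(u + v))).trans (halfTurn (-(u + v)) v)

def edgeCurve (u v : ℝ) : Set (ℝ × ℝ) :=
  semicircle u (-(u + v)) 1 ∪ semicircle (-(u + v)) v (-1)

section Edge

variable {u v u' v' : ℝ}

lemma range_edgePath_subset (hu : 0 < u) (hv : 0 < v) : range (edgePath u v) ⊆ edgeCurve u v := by
  rw [edgePath, Path.trans_range]
  exact union_subset_union (range_halfTurn_subset (by linarith))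
    (range_halfTurn_subset (by linarith))

lemma mem_range_edgePath (u v : ℝ) : ((-(u + v), 0) : ℝ × ℝ) ∈ range (edgePath u v) := by
  rw [edgePath, Path.trans_range]
  exact .inl ⟨1, (halfTurn u (-(u + v))).target⟩

lemma edgePath_injective (hu : 0 < u) (hv : 0 < v) (huv : u ≠ v) : Injective (edgePath u v) := by
  refine Path.trans_injective (halfTurn_injective (by intro h; linarith))
    (halfTurn_injective (by intro h; linarith)) ?_
  rintro z ⟨hz, hz'⟩
  obtain ⟨h0, h1 | h1, h2 | h2⟩ := mem_axis_of_mem_semicircle_neg one_ne_zero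
    (range_halfTurn_subset (by linarith) hz) (range_halfTurn_subset (by linarith) hz')
  · exact Prod.ext h2 h0
  · exact absurd (h1.symm.trans h2) huv
  all_goals exact Prod.ext h1 h0

lemma notMem_range_edgePath {w : ℝ} (hu : 0 < u) (hv : 0 < v) (hw : 0 < w) (hwu : w ≠ u)
    (hwv : w ≠ v) : ((w, 0) : ℝ × ℝ) ∉ range (edgePath u v) := by
  intro h
  rcases range_edgePath_subset hu hv h with h | h <;>
    rcases fst_eq_or_eq_of_mem_semicircle h rfl with h | h <;>
    simp only at h
  exacts [hwu h, by linarith, by linarith, hwv h]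

lemma edgeCurve_inter_subsingleton_of_add_eq (hu : 0 < u) (huv : u < v) (hu' : 0 < u')
    (huv' : u' < v') (hs : u + v = u' + v') (hne : u ≠ u') :
    (edgeCurve u v ∩ edgeCurve u' v').Subsingleton := by
  suffices h : ∀ z ∈ edgeCurve u v ∩ edgeCurve u' v', z = (-(u + v), 0) from
    fun z hz w hw => (h z hz).trans (h w hw).symm
  have hp : ((-(u + v), 0) : ℝ × ℝ) = (-(u' + v'), 0) := by rw [hs]
  rintro z ⟨hz | hz, hz' | hz'⟩
  · refine semicircle_inter_subsingleton one_ne_zero (fun h => hne (by linarith)) ⟨hz, hz'⟩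
      ⟨right_mem_semicircle _ _ _, by rw [hp]; exact right_mem_semicircle _ _ _⟩
  · obtain ⟨h0, h1 | h1, h2 | h2⟩ :=
      mem_axis_of_mem_semicircle_neg one_ne_zero hz hz' <;>
      exact Prod.ext (by linarith) h0
  · obtain ⟨h0, h1 | h1, h2 | h2⟩ :=
      mem_axis_of_mem_semicircle_neg one_ne_zero hz' hz <;>
      exact Prod.ext (by linarith) h0
  · refine semicircle_inter_subsingleton (neg_ne_zero.2 one_ne_zero) (fun h => hne (by linarith))
      ⟨hz, hz'⟩ ⟨left_mem_semicircle _ _ _, by rw [hp]; exact left_mem_semicircle _ _ _⟩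

lemma edgeCurve_inter_subsingleton_of_add_lt (hu : 0 < u) (huv : u < v) (hu' : 0 < u')
    (huv' : u' < v') (hs : u + v < u' + v') :
    (edgeCurve u v ∩ edgeCurve u' v').Subsingleton := by
  have upper_lower :
      ∀ z ∈ semicircle u (-(u + v)) 1, z ∉ semicircle (-(u' + v')) v' (-1) := by
    intro z hz hz'
    obtain ⟨-, h1 | h1, h2 | h2⟩ :=
      mem_axis_of_mem_semicircle_neg one_ne_zero hz hz' <;> linarith
  have lower_upper : ∀ z ∈ semicircle (-(u + v)) v (-1), z ∈ semicircle u' (-(u' + v')) 1 →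
      z = (v, 0) ∧ v = u' := by
    intro z hz hz'
    obtain ⟨h0, h1 | h1, h2 | h2⟩ :=
      mem_axis_of_mem_semicircle_neg one_ne_zero hz' hz <;>
      first | exact ⟨Prod.ext h2 h0, h2.symm.trans h1⟩ | (exfalso; linarith)
  have lower_lower : v < v' → Disjoint (semicircle (-(u + v)) v (-1))
      (semicircle (-(u' + v')) v' (-1)) := fun h =>
    disjoint_semicircle_of_lt_of_lt (by linarith) (by linarith) h
  rcases le_or_gt u' u with hu'u | huu'
  · refine Subsingleton.anti (t := semicircle u (-(u + v)) 1 ∩ semicircle u' (-(u' + v')) 1)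
      (semicircle_inter_subsingleton one_ne_zero fun h => by linarith) ?_
    rintro z ⟨hz | hz, hz' | hz'⟩
    · exact ⟨hz, hz'⟩
    · exact absurd hz' (upper_lower z hz)
    · exact absurd (lower_upper z hz hz').2 (by linarith)
    · exact absurd hz' (disjoint_left.1 (lower_lower (by linarith)) hz)
  have upper_upper : Disjoint (semicircle u (-(u + v)) 1) (semicircle u' (-(u' + v')) 1) := by
    rw [semicircle_comm, semicircle_comm u']
    exact disjoint_semicircle_of_lt_of_lt (by linarith) (by linarith) huu'
  rcases le_or_gt v' v with hv'v | hvv'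
  · refine Subsingleton.anti
      (t := semicircle (-(u + v)) v (-1) ∩ semicircle (-(u' + v')) v' (-1))
      (semicircle_inter_subsingleton (neg_ne_zero.2 one_ne_zero) fun h => by linarith) ?_
    rintro z ⟨hz | hz, hz' | hz'⟩
    · exact absurd hz' (disjoint_left.1 upper_upper hz)
    · exact absurd hz' (upper_lower z hz)
    · exact absurd (lower_upper z hz hz').2 (by linarith)
    · exact ⟨hz, hz'⟩
  · refine Subsingleton.anti (t := {((v, 0) : ℝ × ℝ)}) subsingleton_singleton ?_
    rintro z ⟨hz | hz, hz' | hz'⟩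
    · exact absurd hz' (disjoint_left.1 upper_upper hz)
    · exact absurd hz' (upper_lower z hz)
    · exact (lower_upper z hz hz').1
    · exact absurd hz' (disjoint_left.1 (lower_lower hvv') hz)

lemma range_edgePath_inter_subsingleton (hu : 0 < u) (huv : u < v) (hu' : 0 < u')
    (huv' : u' < v') (hne : (u, v) ≠ (u', v')) :
    (range (edgePath u v) ∩ range (edgePath u' v')).Subsingleton := by
  refine Subsingleton.anti ?_ (inter_subset_inter (range_edgePath_subset hu (hu.trans huv))
    (range_edgePath_subset hu' (hu'.trans huv')))
  rcases lt_trichotomy (u + v) (u' + v') with hs | hs | hs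
  · exact edgeCurve_inter_subsingleton_of_add_lt hu huv hu' huv' hs
  · refine edgeCurve_inter_subsingleton_of_add_eq hu huv hu' huv' hs fun h => hne ?_
    rw [h, show v = v' by linarith]
  · rw [inter_comm]
    exact edgeCurve_inter_subsingleton_of_add_lt hu' huv' hu huv hs

end Edge

theorem simple_drawing_Kn_blocked_general (n : ℕ)
    (v : Fin n → ℝ × ℝ) (hv : ∀ i : Fin n, v i = (((i : ℕ) : ℝ) + 1, 0))
    (B : Finset (ℝ × ℝ))
    (hBdef : B = (Finset.Icc 3 (2 * n - 1)).image (fun k : ℕ => ((-(k : ℝ)), (0 : ℝ)))) :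
    ∃ γ : ∀ i j : Fin n, Path (v i) (v j),
      (∀ i j : Fin n, i < j → Function.Injective (γ i j)) ∧
      (∀ i j : Fin n, i < j → ∀ m : Fin n, m ≠ i → m ≠ j →
        v m ∉ Set.range (γ i j)) ∧
      (∀ i j : Fin n, i < j →
        ((-(((i : ℕ) : ℝ) + ((j : ℕ) : ℝ) + 2)), (0 : ℝ)) ∈ Set.range (γ i j)) ∧
      (∀ i j i' j' : Fin n, i < j → i' < j' → (i, j) ≠ (i', j') →
        Set.Subsingleton (Set.range (γ i j) ∩ Set.range (γ i' j'))) ∧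
      B.card = 2 * n - 3 ∧
      (∀ m : Fin n, v m ∉ B) ∧
      (∀ i j : Fin n, i < j → ∃ b ∈ B, b ∈ Set.range (γ i j)) := by
  set x : Fin n → ℝ := fun i => (i : ℕ) + 1 with hx
  have hx_pos (i : Fin n) : 0 < x i := by positivity
  have hx_mono : StrictMono x := fun i j hij => add_lt_add_left (Nat.cast_lt.2 hij) 1
  have hrange (i j : Fin n) : range ((edgePath (x i) (x j)).cast (hv i) (hv j)) =
      range (edgePath (x i) (x j)) := by rw [Path.cast_coe]
  have hblock (i j : Fin n) : ((-((i : ℕ) + (j : ℕ) + 2 : ℝ)), (0 : ℝ)) ∈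
      range ((edgePath (x i) (x j)).cast (hv i) (hv j)) := by
    rw [hrange, show ((i : ℕ) + (j : ℕ) + 2 : ℝ) = x i + x j by simp only [hx]; ring]
    exact mem_range_edgePath _ _
  refine ⟨fun i j => (edgePath (x i) (x j)).cast (hv i) (hv j), fun i j hij => ?_,
    fun i j hij m hmi hmj hm => ?_, fun i j _ => hblock i j, fun i j i' j' hij hij' hne => ?_,
    ?_, fun m hm => ?_, fun i j hij => ⟨_, ?_, hblock i j⟩⟩
  · rw [Path.cast_coe]
    exact edgePath_injective (hx_pos i) (hx_pos j) (hx_mono hij).ne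
  · rw [hv m, hrange] at hm
    exact notMem_range_edgePath (hx_pos i) (hx_pos j) (hx_pos m)
      (hx_mono.injective.ne hmi) (hx_mono.injective.ne hmj) hm
  · rw [hrange, hrange]
    exact range_edgePath_inter_subsingleton (hx_pos i) (hx_mono hij) (hx_pos i') (hx_mono hij')
      ((hx_mono.injective.prodMap hx_mono.injective).ne hne)
  · rw [hBdef, Finset.card_image_of_injective _ fun a b h => by simpa using h, Nat.card_Icc]
    omega
  · rw [hBdef, Finset.mem_image] at hm
    obtain ⟨k, -, hk⟩ := hm
    have : -(k : ℝ) = x m := by rw [hv m] at hk; exact congrArg Prod.fst hk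
    linarith [hx_pos m, k.cast_nonneg (α := ℝ)]
  · rw [hBdef]
    exact Finset.mem_image.2 ⟨(i : ℕ) + j + 2, Finset.mem_Icc.2 (by omega), by push_cast; rfl⟩

/-- There is a simple (non-geometric) drawing of `K_n` blocked by `2n - 3` points:
vertex `v_i` at `(i, 0)` (`1 ≤ i ≤ n`), edge `v_i v_j` drawn as a simple curve through
`(-(i+j), 0)`, any two edges intersecting at most once, blocked by
`{(-k, 0) : 3 ≤ k ≤ 2n - 1}`. -/
theorem simple_drawing_Kn_blocked (n : ℕ) (hn : 2 ≤ n)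
    (v : Fin n → ℝ × ℝ) (hv : ∀ i : Fin n, v i = (((i : ℕ) : ℝ) + 1, 0))
    (B : Finset (ℝ × ℝ))
    (hBdef : B = (Finset.Icc 3 (2 * n - 1)).image (fun k : ℕ => ((-(k : ℝ)), (0 : ℝ)))) :
    ∃ γ : ∀ i j : Fin n, Path (v i) (v j),
      (∀ i j : Fin n, i < j → Function.Injective (γ i j)) ∧
      (∀ i j : Fin n, i < j → ∀ m : Fin n, m ≠ i → m ≠ j →
        v m ∉ Set.range (γ i j)) ∧
      (∀ i j : Fin n, i < j →
        ((-(((i : ℕ) : ℝ) + ((j : ℕ) : ℝ) + 2)), (0 : ℝ)) ∈ Set.range (γ i j)) ∧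
      (∀ i j i' j' : Fin n, i < j → i' < j' → (i, j) ≠ (i', j') →
        Set.Subsingleton (Set.range (γ i j) ∩ Set.range (γ i' j'))) ∧
      B.card = 2 * n - 3 ∧
      (∀ m : Fin n, v m ∉ B) ∧
      (∀ i j : Fin n, i < j → ∃ b ∈ B, b ∈ Set.range (γ i j)) :=
  simple_drawing_Kn_blocked_general n v hv B hBdef
end
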